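/- arXiv:1311.4951 — 2 statements merged into one kernel-verified Lean document; each statement's English description precedes it below -/
import Mathlib

section
/- Let (X,d) be a complete metric space, x₀ ∈ X, Y a locally convex space, D ⊆ Y a convex cone, H ⊆ D \ {0} a σ-convex (cs-complete) convex set, and f : X → nonempty subsets of Y. Assume: there exists ξ ∈ Y* with inf ξ(H) > 0 and ξ ≥ 0 on D, ξ lower bounded on f(S(x₀)) where S(x₀) = {x : f(x₀) ⊆ f(x) + γd(x,x₀)H + D}; and f is D-sequentially lower monotone with D-closed values. Then for any γ > 0 there exists x̂ ∈ X with: (a) f(x₀) ⊆ f(x̂) + γd(x̂,x₀)H + D; (b) for every x ≠ x̂, f(x̂) ⊄ f(x) + γd(x,x̂)H + D. -/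
/-!
Scalarizing by `ξ`, the function `φ x = inf ξ(f x)` drops by at least `γ · inf ξ(H) · d(x', x)`
whenever `x' ∈ S(x)`. Choosing successively near-minimizers of `φ` over `S(uₙ)` gives a chain
`uₙ₊₁ ∈ S(uₙ)` with summable steps, hence convergent to some `x̂`. Along the chain every
`y ∈ f(uₙ)` splits as a point of `f(u_N) + D` plus a partial sum of `∑ γ d(uₖ₊₁, uₖ) hₖ` with
`hₖ ∈ H`; σ-convexity sums the series to a point of `γσ • H`, and lower monotonicity together
with the closedness of `f(x̂) + D` carries the remainder to `f(x̂) + D`. So `x̂ ∈ S(uₙ)` for all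
`n`, and any `x ∈ S(x̂)` lies in every `S(uₙ)`; near-minimality then forces `d(x, x̂) = 0`.
-/

open Pointwise Filter Topology

/-- A set `H` is σ-convex (cs-complete) if every convex series of its points
converges to a point of `H`. -/
def SigmaConvex {Y : Type*} [AddCommGroup Y] [Module ℝ Y] [TopologicalSpace Y]
    (H : Set Y) : Prop :=
  ∀ (x : ℕ → Y) (lam : ℕ → ℝ), (∀ n, x n ∈ H) → (∀ n, 0 ≤ lam n) →
    Tendsto (fun N => ∑ n ∈ Finset.range N, lam n) atTop (nhds 1) →
    ∃ h ∈ H, Tendsto (fun N => ∑ n ∈ Finset.range N, lam n • x n) atTop (nhds h)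

lemma SigmaConvex.exists_tendsto_sum_smul {Y : Type*} [AddCommGroup Y] [Module ℝ Y]
    [TopologicalSpace Y] [ContinuousConstSMul ℝ Y] {H : Set Y} (hH : SigmaConvex H)
    {x : ℕ → Y} {c : ℕ → ℝ} {σ : ℝ} (hx : ∀ n, x n ∈ H) (hc : ∀ n, 0 ≤ c n)
    (hcσ : HasSum c σ) (hσ : 0 < σ) :
    ∃ h ∈ H, Tendsto (fun N => ∑ n ∈ Finset.range N, c n • x n) atTop (𝓝 (σ • h)) := by
  obtain ⟨h, hh, htend⟩ := hH x (fun n => c n / σ) hx (fun n => div_nonneg (hc n) hσ.le)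
    (by simpa [Finset.sum_div, hσ.ne'] using hcσ.tendsto_sum_nat.div_const σ)
  refine ⟨h, hh, (htend.const_smul σ).congr fun N => ?_⟩
  simp [Finset.smul_sum, smul_smul, mul_div_cancel₀ _ hσ.ne']

section OrderingPrinciple

variable {X : Type*}

lemma exists_chain_forall_le_add {R : X → X → Prop} (hrefl : ∀ x, R x x)
    (htrans : ∀ {x y z}, R x y → R y z → R x z) {φ : X → ℝ} {x₀ : X} {c : ℝ}
    (hφc : ∀ x, R x₀ x → c ≤ φ x) {ε : ℕ → ℝ} (hε : ∀ n, 0 < ε n) :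
    ∃ u : ℕ → X, u 0 = x₀ ∧ (∀ n, R x₀ (u n)) ∧ (∀ n, R (u n) (u (n + 1))) ∧
      ∀ n x, R (u n) x → φ (u (n + 1)) ≤ φ x + ε n := by
  have step : ∀ (n : ℕ) (x : {x // R x₀ x}), ∃ y : {x // R x₀ x},
      R x y ∧ ∀ z, R x z → φ y ≤ φ z + ε n := by
    rintro n ⟨x, hx⟩
    have hbdd : BddBelow (φ '' {z | R x z}) :=
      ⟨c, by rintro _ ⟨z, hz, rfl⟩; exact hφc z (htrans hx hz)⟩
    obtain ⟨_, ⟨y, hy, rfl⟩, hlt⟩ := exists_lt_of_csInf_lt (s := φ '' {z | R x z})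
      ⟨φ x, x, hrefl x, rfl⟩ (lt_add_of_pos_right _ (hε n))
    exact ⟨⟨y, htrans hx hy⟩, hy, fun z hz => by linarith [csInf_le hbdd ⟨z, hz, rfl⟩]⟩
  choose next hnext using step
  let v : ℕ → {x // R x₀ x} := fun n => Nat.rec ⟨x₀, hrefl x₀⟩ next n
  exact ⟨fun n => (v n).1, rfl, fun n => (v n).2, fun n => (hnext n (v n)).1,
    fun n => (hnext n (v n)).2⟩

lemma summable_of_le_sub_succ {a b : ℕ → ℝ} {c : ℝ} (ha : ∀ n, 0 ≤ a n) (hb : ∀ n, c ≤ b n)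
    (h : ∀ n, a n ≤ b n - b (n + 1)) : Summable a :=
  summable_of_sum_range_le ha fun N =>
    calc ∑ n ∈ Finset.range N, a n ≤ ∑ n ∈ Finset.range N, (b n - b (n + 1)) :=
          Finset.sum_le_sum fun n _ => h n
      _ = b 0 - b N := Finset.sum_range_sub' b N
      _ ≤ b 0 - c := by linarith [hb N]

/-- An ordering principle of Brezis–Browder type. -/
theorem exists_maximal_of_mul_dist_le_sub [MetricSpace X] [CompleteSpace X]
    {R : X → X → Prop} (hrefl : ∀ x, R x x) (htrans : ∀ {x y z}, R x y → R y z → R x z)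
    {φ : X → ℝ} {x₀ : X} {c K : ℝ} (hK : 0 < K) (hφc : ∀ x, R x₀ x → c ≤ φ x)
    (hφ : ∀ x y, R x₀ x → R x y → φ y + K * dist y x ≤ φ x)
    (hlim : ∀ (u : ℕ → X) (xbar : X), (∀ n, R (u n) (u (n + 1))) →
      Summable (fun n => dist (u n) (u (n + 1))) → Tendsto u atTop (𝓝 xbar) → R (u 0) xbar) :
    ∃ xhat, R x₀ xhat ∧ ∀ x, R xhat x → x = xhat := by
  obtain ⟨u, hu0, hu, hchain, hmin⟩ := exists_chain_forall_le_add hrefl htrans hφc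
    (ε := fun n => (1 / 2 : ℝ) ^ n) (fun n => by positivity)
  have hsum : Summable fun n => dist (u n) (u (n + 1)) := by
    refine summable_of_le_sub_succ (b := fun n => φ (u n) / K) (c := c / K)
      (fun n => dist_nonneg) (fun n => div_le_div_of_nonneg_right (hφc _ (hu n)) hK.le)
      fun n => ?_
    rw [← sub_div, le_div_iff₀ hK, dist_comm]
    linarith [hφ _ _ (hu n) (hchain n)]
  obtain ⟨xhat, hxhat⟩ := cauchySeq_tendsto_of_complete (cauchySeq_of_summable_dist hsum)
  have hxhatn : ∀ n, R (u n) xhat := fun n => by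
    simpa using hlim (fun k => u (k + n)) xhat
      (fun k => by simpa only [add_right_comm k 1 n] using hchain (k + n))
      ((summable_nat_add_iff n).2 hsum |>.congr fun k => by rw [add_right_comm])
      (hxhat.comp (tendsto_add_atTop_nat n))
  refine ⟨xhat, hu0 ▸ hxhatn 0, fun x hx => ?_⟩
  have hbound : ∀ n, K * dist x xhat ≤ (1 / 2 : ℝ) ^ n := fun n => by
    have hx₀xhat := htrans (hu n) (hxhatn n)
    linarith [hφ xhat x hx₀xhat hx, hφ (u (n + 1)) xhat (hu _) (hxhatn _),
      hmin n x (htrans (hxhatn n) hx), mul_nonneg hK.le (dist_nonneg (x := xhat) (y := u (n + 1)))]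
  have hle : K * dist x xhat ≤ 0 :=
    ge_of_tendsto' (tendsto_pow_atTop_nhds_zero_of_lt_one (by norm_num) (by norm_num)) hbound
  exact dist_le_zero.1 (nonpos_of_mul_nonpos_right hle hK)

end OrderingPrinciple

section Cone

variable {Y : Type*} [AddCommGroup Y] [Module ℝ Y] {H : Set Y} (D : PointedCone ℝ Y)

lemma add_coe_add_coe (A : Set Y) : A + D + D = A + D := by
  rw [add_assoc, coe_add_coe]

variable {D}

lemma smul_set_subset_pointedCone (hHD : H ⊆ D) {a : ℝ} (ha : 0 ≤ a) : a • H ⊆ D :=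
  Set.smul_set_subset_iff.2 fun _ hh => D.smul_mem ha (hHD hh)

lemma smul_set_subset_smul_set_add (hHD : H ⊆ D) {a b : ℝ} (hab : a ≤ b) :
    b • H ⊆ a • H + D := by
  calc b • H = (a + (b - a)) • H := by rw [add_sub_cancel]
    _ ⊆ a • H + (b - a) • H := Set.add_smul_subset _ _ _
    _ ⊆ a • H + D := by gcongr; exact smul_set_subset_pointedCone hHD (sub_nonneg.2 hab)

end Cone

section Improves

variable {X Y : Type*} [MetricSpace X] [AddCommGroup Y] [Module ℝ Y]

/-- `Improves f H D γ x x'` is the paper's `x' ∈ S(x)`. -/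
def Improves (f : X → Set Y) (H D : Set Y) (γ : ℝ) (x x' : X) : Prop :=
  f x ⊆ f x' + (γ * dist x' x) • H + D

variable {f : X → Set Y} {H : Set Y} (D : PointedCone ℝ Y) {γ : ℝ} {x x' x'' : X}

lemma improves_refl (hH : H.Nonempty) (x : X) : Improves f H D γ x x := by
  rw [Improves, dist_self, mul_zero, Set.zero_smul_set hH, add_zero]
  exact Set.subset_add_left _ D.zero_mem

variable {D}

lemma Improves.trans (hγ : 0 ≤ γ) (hHD : H ⊆ D) (hHconv : Convex ℝ H)
    (h₁ : Improves f H D γ x x') (h₂ : Improves f H D γ x' x'') : Improves f H D γ x x'' := by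
  have hdist : γ * dist x'' x ≤ γ * dist x'' x' + γ * dist x' x := by
    rw [← mul_add]; exact mul_le_mul_of_nonneg_left (dist_triangle _ _ _) hγ
  calc f x ⊆ f x'' + (γ * dist x'' x') • H + D + (γ * dist x' x) • H + D :=
        Set.Subset.trans h₁ (Set.add_subset_add_right (Set.add_subset_add_right h₂))
    _ = f x'' + ((γ * dist x'' x' + γ * dist x' x) • H) + D + D := by
        rw [hHconv.add_smul (by positivity) (by positivity)]; abel
    _ ⊆ f x'' + ((γ * dist x'' x) • H + D) + D + D := by
        gcongr; exact smul_set_subset_smul_set_add hHD hdist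
    _ = f x'' + (γ * dist x'' x) • H + D := by
        rw [← add_assoc, add_coe_add_coe, add_coe_add_coe]

lemma Improves.subset_add (hγ : 0 ≤ γ) (hHD : H ⊆ D) (h : Improves f H D γ x x') :
    f x ⊆ f x' + D :=
  calc f x ⊆ f x' + (γ * dist x' x) • H + D := h
    _ ⊆ f x' + D + D := by gcongr; exact smul_set_subset_pointedCone hHD (by positivity)
    _ = f x' + D := add_coe_add_coe D _

lemma Improves.exists_sub_smul_mem (h : Improves f H D γ x x') {z : Y} (hz : z ∈ f x + D) :
    ∃ k ∈ H, z - (γ * dist x' x) • k ∈ f x' + D := by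
  obtain ⟨a, ha, d, hd, rfl⟩ := hz
  obtain ⟨_, ⟨a', ha', _, ⟨k, hk, rfl⟩, rfl⟩, e, he, rfl⟩ := h ha
  exact ⟨k, hk, a', ha', e + d, D.add_mem he hd, by beta_reduce; abel⟩

lemma exists_seq_sub_sum_mem {u : ℕ → X} (hchain : ∀ n, Improves f H D γ (u n) (u (n + 1)))
    {y : Y} (hy : y ∈ f (u 0) + D) :
    ∃ k : ℕ → Y, (∀ n, k n ∈ H) ∧ ∀ N,
      y - ∑ n ∈ Finset.range N, (γ * dist (u (n + 1)) (u n)) • k n ∈ f (u N) + D := by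
  have step : ∀ n z, ∃ k, z ∈ f (u n) + D →
      k ∈ H ∧ z - (γ * dist (u (n + 1)) (u n)) • k ∈ f (u (n + 1)) + D := fun n z => by
    by_cases hz : z ∈ f (u n) + D
    · obtain ⟨k, hk, hmem⟩ := (hchain n).exists_sub_smul_mem hz
      exact ⟨k, fun _ => ⟨hk, hmem⟩⟩
    · exact ⟨0, fun h => absurd h hz⟩
  choose next hnext using step
  let r : ℕ → Y := fun N => Nat.rec y (fun n z => z - (γ * dist (u (n + 1)) (u n)) • next n z) N
  have hr : ∀ N, r N ∈ f (u N) + D := fun N => by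
    induction N with
    | zero => exact hy
    | succ n ih => exact (hnext n _ ih).2
  refine ⟨fun n => next n (r n), fun n => (hnext n _ (hr n)).1, fun N => ?_⟩
  suffices y - ∑ n ∈ Finset.range N, (γ * dist (u (n + 1)) (u n)) • next n (r n) = r N by
    rw [this]; exact hr N
  induction N with
  | zero => simp [r]
  | succ n ih => rw [Finset.sum_range_succ, ← sub_sub, ih]

lemma Improves.sInf_image_add_le (ξ : Y →ₗ[ℝ] ℝ) {α : ℝ} (hγ : 0 ≤ γ)
    (hbdd : BddBelow (ξ '' f x')) (hne : (f x).Nonempty) (hξH : ∀ h ∈ H, α ≤ ξ h)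
    (hξD : ∀ d ∈ D, 0 ≤ ξ d) (h : Improves f H D γ x x') :
    sInf (ξ '' f x') + γ * α * dist x' x ≤ sInf (ξ '' f x) := by
  refine le_csInf (hne.image _) ?_
  rintro _ ⟨_, hy, rfl⟩
  obtain ⟨_, ⟨a, ha, _, ⟨k, hk, rfl⟩, rfl⟩, d, hd, rfl⟩ := h hy
  simp only [map_add, map_smul, smul_eq_mul]
  have hdist : 0 ≤ γ * dist x' x := by positivity
  linarith [csInf_le hbdd ⟨a, ha, rfl⟩, mul_le_mul_of_nonneg_left (hξH k hk) hdist, hξD d hd]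

lemma improves_of_tendsto [TopologicalSpace Y] [ContinuousSub Y] [ContinuousConstSMul ℝ Y]
    (hγ : 0 < γ) (hHD : H ⊆ D) (hH : H.Nonempty) (hHσ : SigmaConvex H) {u : ℕ → X} {xbar : X}
    (hchain : ∀ n, Improves f H D γ (u n) (u (n + 1)))
    (hsum : Summable fun n => dist (u n) (u (n + 1))) (hu : Tendsto u atTop (𝓝 xbar))
    (hlow : ∀ n, f (u n) ⊆ f xbar + D) (hclosed : IsClosed (f xbar + (D : Set Y))) :
    Improves f H D γ (u 0) xbar := by
  rcases eq_or_ne xbar (u 0) with rfl | hne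
  · exact improves_refl D hH _
  set σ := ∑' n, dist (u (n + 1)) (u n)
  have hd : Summable fun n => dist (u (n + 1)) (u n) := hsum.congr fun n => dist_comm _ _
  have hdist : dist xbar (u 0) ≤ σ := by
    rw [dist_comm]
    exact dist_le_tsum_of_dist_le_of_tendsto₀ _ (fun n => (dist_comm _ _).le) hd hu
  intro y hy
  obtain ⟨k, hkH, hres⟩ := exists_seq_sub_sum_mem hchain (Set.subset_add_left _ D.zero_mem hy)
  obtain ⟨kbar, hkbar, htend⟩ := hHσ.exists_tendsto_sum_smul hkH
    (fun n => mul_nonneg hγ.le dist_nonneg) (hd.hasSum.mul_left γ)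
    (mul_pos hγ ((dist_pos.2 hne).trans_le hdist))
  have hmem : y - (γ * σ) • kbar ∈ f xbar + (D : Set Y) := by
    refine hclosed.mem_of_tendsto (tendsto_const_nhds.sub htend) (Eventually.of_forall fun N => ?_)
    rw [← add_coe_add_coe D]
    exact Set.add_subset_add_right (hlow N) (hres N)
  suffices f xbar + (D : Set Y) + (γ * σ) • H ⊆ f xbar + (γ * dist xbar (u 0)) • H + D from
    this ⟨_, hmem, _, Set.smul_mem_smul_set hkbar, sub_add_cancel _ _⟩
  calc f xbar + (D : Set Y) + (γ * σ) • H
        ⊆ f xbar + ((γ * dist xbar (u 0)) • H + (D : Set Y)) + D := by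
        rw [add_right_comm]; gcongr
        exact smul_set_subset_smul_set_add hHD (mul_le_mul_of_nonneg_left hdist hγ.le)
    _ = f xbar + (γ * dist xbar (u 0)) • H + D := by rw [← add_assoc, add_coe_add_coe]

end Improves

theorem setvalued_EVP_sigma_convex_general {X Y : Type*} [MetricSpace X] [CompleteSpace X]
    [AddCommGroup Y] [Module ℝ Y] [TopologicalSpace Y] [IsTopologicalAddGroup Y]
    [ContinuousSMul ℝ Y]
    (D : Set Y) (hDadd : D + D ⊆ D) (hDsmul : ∀ α : ℝ, 0 ≤ α → α • D ⊆ D)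
    (H : Set Y) (hHD : H ⊆ D \ {0}) (hHconv : Convex ℝ H) (hHσ : SigmaConvex H)
    (f : X → Set Y) (hf : ∀ x, (f x).Nonempty)
    (x₀ : X) (γ : ℝ) (hγ : 0 < γ)
    (S : X → Set X)
    (hS : ∀ x, S x = {x' | f x ⊆ f x' + (γ * dist x' x) • H + D})
    (ξ : Y →L[ℝ] ℝ) (hξH : 0 < sInf (ξ '' H)) (hξD : ∀ d ∈ D, 0 ≤ ξ d)
    (hbd : ∃ c : ℝ, ∀ y ∈ ⋃ x ∈ S x₀, f x, c ≤ ξ y)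
    (hslm : ∀ (xs : ℕ → X) (xbar : X), (∀ n, f (xs n) ⊆ f (xs (n + 1)) + D) →
      Tendsto xs atTop (nhds xbar) → ∀ n, f (xs n) ⊆ f xbar + D)
    (hclv : ∀ x : X, IsClosed (f x + D)) :
    ∃ xhat : X,
      (f x₀ ⊆ f xhat + (γ * dist xhat x₀) • H + D) ∧
      (∀ x : X, x ≠ xhat → ¬ f xhat ⊆ f x + (γ * dist x xhat) • H + D) := by
  obtain ⟨c, hc⟩ := hbd
  have hH : H.Nonempty := Set.nonempty_iff_ne_empty.2 fun h => by simp [h] at hξH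
  have hξα : ∀ h ∈ H, sInf (ξ '' H) ≤ ξ h := fun h hh =>
    csInf_le ⟨0, by rintro _ ⟨h', hh', rfl⟩; exact hξD h' (hHD hh').1⟩ ⟨h, hh, rfl⟩
  let C : PointedCone ℝ Y :=
    { carrier := D
      add_mem' := fun ha hb => hDadd (Set.add_mem_add ha hb)
      zero_mem' := by simpa using hDsmul 0 le_rfl (Set.smul_mem_smul_set (hHD hH.some_mem).1)
      smul_mem' := fun a _ hy => hDsmul a a.2 (Set.smul_mem_smul_set hy) }
  have hHC : H ⊆ C := fun h hh => (hHD hh).1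
  have hξc : ∀ x, Improves f H C γ x₀ x → ∀ y ∈ f x, c ≤ ξ y := fun x hx y hy =>
    hc y (Set.mem_biUnion (by rw [hS]; exact hx) hy)
  obtain ⟨xhat, h₀, hmax⟩ := exists_maximal_of_mul_dist_le_sub (improves_refl C hH)
    (fun h₁ h₂ => h₁.trans hγ.le hHC hHconv h₂) (mul_pos hγ hξH)
    (fun x hx => le_csInf ((hf x).image ξ) (by rintro _ ⟨y, hy, rfl⟩; exact hξc x hx y hy))
    (fun x x' hx hxx' => hxx'.sInf_image_add_le ξ.toLinearMap hγ.le
      ⟨c, by rintro _ ⟨y, hy, rfl⟩; exact hξc x' (hx.trans hγ.le hHC hHconv hxx') y hy⟩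
      (hf x) hξα hξD)
    (fun u xbar hchain hsum hu => improves_of_tendsto hγ hHC hH hHσ hchain hsum hu
      (hslm u xbar (fun n => (hchain n).subset_add hγ.le hHC) hu) (hclv xbar))
  exact ⟨xhat, h₀, fun x hne hx => hne (hmax x hx)⟩

/-- **Theorem 4.2.** Set-valued EVP with a σ-convex perturbation set. -/
theorem setvalued_EVP_sigma_convex {X Y : Type*} [MetricSpace X] [CompleteSpace X]
    [AddCommGroup Y] [Module ℝ Y] [TopologicalSpace Y] [IsTopologicalAddGroup Y]
    [ContinuousSMul ℝ Y] [LocallyConvexSpace ℝ Y]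
    (D : Set Y) (hDadd : D + D ⊆ D) (hDsmul : ∀ α : ℝ, 0 ≤ α → α • D ⊆ D)
    (H : Set Y) (hHD : H ⊆ D \ {0}) (hHconv : Convex ℝ H) (hHσ : SigmaConvex H)
    (f : X → Set Y) (hf : ∀ x, (f x).Nonempty)
    (x₀ : X) (γ : ℝ) (hγ : 0 < γ)
    (S : X → Set X)
    (hS : ∀ x, S x = {x' | f x ⊆ f x' + (γ * dist x' x) • H + D})
    (ξ : Y →L[ℝ] ℝ) (hξH : 0 < sInf (ξ '' H)) (hξD : ∀ d ∈ D, 0 ≤ ξ d)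
    (hbd : ∃ c : ℝ, ∀ y ∈ ⋃ x ∈ S x₀, f x, c ≤ ξ y)
    (hslm : ∀ (xs : ℕ → X) (xbar : X), (∀ n, f (xs n) ⊆ f (xs (n + 1)) + D) →
      Tendsto xs atTop (nhds xbar) → ∀ n, f (xs n) ⊆ f xbar + D)
    (hclv : ∀ x : X, IsClosed (f x + D)) :
    ∃ xhat : X,
      (f x₀ ⊆ f xhat + (γ * dist xhat x₀) • H + D) ∧
      (∀ x : X, x ≠ xhat → ¬ f xhat ⊆ f x + (γ * dist x xhat) • H + D) :=
  setvalued_EVP_sigma_convex_general D hDadd hDsmul H hHD hHconv hHσ f hf x₀ γ hγ S hS ξ hξH hξD hbd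
    hslm hclv
end

section
/- Let (X,d) be a metric space, Y a locally convex space, D ⊆ Y a convex cone, H ⊆ D \ {0} convex, and f : X → nonempty subsets of Y. Let p : X × X → [0,∞) satisfy: (p₁) p(x₁,x₃) ≤ p(x₁,x₂) + p(x₂,x₃); (p₂) every sequence (xₙ) with p(xₙ,x_m) → 0 (m > n → ∞) is Cauchy; (p₃) p(x,x′) > 0 whenever x ≠ x′. Let x₀ ∈ X with S(x₀) := {x : f(x₀) ⊆ f(x) + p(x₀,x)H + D} nonempty, (X,d) S(x₀)-dynamically complete, and S(x) dynamically closed for every x ∈ S(x₀). Assume 0 ∉ cl(H+D) and there exists ξ ∈ Y* with inf ξ(H) > 0, ξ ≥ 0 on D, ξ lower bounded on f(S(x₀)). Then there exists x̂ ∈ X such that: (a) f(x₀) ⊆ f(x̂) + p(x₀,x̂)H + D; (b) for all x ≠ x̂, f(x̂) ⊄ f(x) + p(x̂,x)H + D. -/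
/-!
Scalarize with `φ x = inf ξ(f x) / inf ξ(H)`: the relation `x' ∈ S x` is transitive and forces
`φ x' + p x x' ≤ φ x`. Unless some `x ∈ S x₀` already has `S x ⊆ {x}`, choosing `x_{n+1} ∈ S x_n`
that nearly minimizes `φ` on `S x_n` gives a `p`-Cauchy sequence; its limit `x̂` lies in every
`S x_n`, so any `v ∈ S x̂` has `φ x̂ ≤ φ v`, while `φ v + p x̂ v ≤ φ x̂`. Hence `p x̂ v ≤ 0`,
i.e. `v = x̂`.
-/

open Pointwise Filter Topology Set

section Cone

variable {Y : Type*} [AddCommGroup Y] [Module ℝ Y] {D H : Set Y}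

lemma smul_add_subset_smul_add_of_le (hDadd : D + D ⊆ D) (hDsmul : ∀ α : ℝ, 0 ≤ α → α • D ⊆ D)
    (hHD : H ⊆ D) (hH : Convex ℝ H) {a b : ℝ} (hb : 0 ≤ b) (hba : b ≤ a) :
    a • H + D ⊆ b • H + D := by
  have hsplit : a • H = b • H + (a - b) • H := by
    rw [← hH.add_smul hb (sub_nonneg.2 hba), add_sub_cancel]
  calc a • H + D = b • H + ((a - b) • H + D) := by rw [hsplit, add_assoc]
    _ ⊆ b • H + (D + D) :=
      add_subset_add_left (add_subset_add_right
        ((smul_set_mono hHD).trans (hDsmul _ (sub_nonneg.2 hba))))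
    _ ⊆ b • H + D := add_subset_add_left hDadd

lemma subset_add_smul_add_trans (hDadd : D + D ⊆ D) (hDsmul : ∀ α : ℝ, 0 ≤ α → α • D ⊆ D)
    (hHD : H ⊆ D) (hH : Convex ℝ H) {A B C : Set Y} {r s t : ℝ} (hr : 0 ≤ r) (hs : 0 ≤ s)
    (ht : 0 ≤ t) (hrst : t ≤ r + s) (hAB : A ⊆ B + r • H + D) (hBC : B ⊆ C + s • H + D) :
    A ⊆ C + t • H + D :=
  calc A ⊆ C + s • H + D + r • H + D := hAB.trans (add_subset_add_right (add_subset_add_right hBC))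
    _ = C + ((r + s) • H + (D + D)) := by rw [hH.add_smul hr hs]; abel
    _ ⊆ C + (t • H + D) :=
      add_subset_add_left ((add_subset_add_left hDadd).trans
        (smul_add_subset_smul_add_of_le hDadd hDsmul hHD hH ht hrst))
    _ = C + t • H + D := (add_assoc _ _ _).symm

lemma sInf_image_add_mul_le_of_subset (ξ : Y →ₗ[ℝ] ℝ) {A B : Set Y} {α r : ℝ} (hr : 0 ≤ r)
    (hαH : ∀ h ∈ H, α ≤ ξ h) (hD : ∀ d ∈ D, 0 ≤ ξ d) (hA : A.Nonempty) (hB : BddBelow (ξ '' B))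
    (hAB : A ⊆ B + r • H + D) : sInf (ξ '' B) + α * r ≤ sInf (ξ '' A) := by
  refine le_csInf (hA.image ξ) ?_
  rintro _ ⟨y, hy, rfl⟩
  obtain ⟨_, ⟨b, hb, _, ⟨h, hh, rfl⟩, rfl⟩, d, hd, rfl⟩ := hAB hy
  rw [map_add, map_add, map_smul, smul_eq_mul]
  nlinarith [csInf_le hB (mem_image_of_mem ξ hb), hαH h hh, hD d hd]

end Cone

section Dynamic

variable {X : Type*} {S : X → Set X}

def IsDynamicallyClosed [TopologicalSpace X] (S : X → Set X) (A : Set X) : Prop :=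
  ∀ xs : ℕ → X, (∀ n, xs n ∈ A) → (∀ n, S (xs (n + 1)) ⊆ S (xs n)) → (∀ n, S (xs n) ⊆ A) →
    ∀ xbar : X, Tendsto xs atTop (𝓝 xbar) → xbar ∈ A

def IsDynamicallyComplete [UniformSpace X] (S : X → Set X) (A : Set X) : Prop :=
  ∀ xs : ℕ → X, (∀ n, xs n ∈ A) → (∀ n, S (xs (n + 1)) ⊆ S (xs n)) → (∀ n, S (xs n) ⊆ A) →
    CauchySeq xs → ∃ u : X, Tendsto xs atTop (𝓝 u)

def IsCauchyFor (p : X → X → ℝ) (xs : ℕ → X) : Prop :=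
  ∀ ε : ℝ, 0 < ε → ∃ n₀ : ℕ, ∀ m n : ℕ, n₀ ≤ n → n < m → p (xs n) (xs m) < ε

lemma mem_of_forall_succ_mem (htrans : ∀ x x', x' ∈ S x → S x' ⊆ S x) {xs : ℕ → X}
    (hsucc : ∀ n, xs (n + 1) ∈ S (xs n)) {n m : ℕ} (h : n < m) : xs m ∈ S (xs n) := by
  induction m, h using Nat.le_induction with
  | base => exact hsucc n
  | succ m _ ih => exact htrans _ _ ih (hsucc m)

lemma mem_of_tendsto_of_isDynamicallyClosed [TopologicalSpace X]
    (htrans : ∀ x x', x' ∈ S x → S x' ⊆ S x) {xs : ℕ → X} (hsucc : ∀ n, xs (n + 1) ∈ S (xs n))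
    {u : X} (hu : Tendsto xs atTop (𝓝 u)) (n : ℕ) (hclosed : IsDynamicallyClosed S (S (xs n))) :
    u ∈ S (xs n) := by
  have htail : ∀ k, xs (k + (n + 1)) ∈ S (xs n) := fun k =>
    mem_of_forall_succ_mem htrans hsucc (by omega)
  refine hclosed (fun k => xs (k + (n + 1))) htail (fun k => ?_) (fun k => htrans _ _ (htail k))
    u (hu.comp (tendsto_add_atTop_nat (n + 1)))
  rw [Nat.add_right_comm]
  exact htrans _ _ (hsucc _)

lemma isCauchyFor_of_add_le {p : X → X → ℝ} {φ : X → ℝ} {xs : ℕ → X}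
    (hp0 : ∀ x x', 0 ≤ p x x') (hbdd : BddBelow (range fun n => φ (xs n)))
    (hφ : ∀ n m, n < m → φ (xs m) + p (xs n) (xs m) ≤ φ (xs n)) : IsCauchyFor p xs := by
  have hanti : Antitone fun n => φ (xs n) := antitone_nat_of_succ_le fun n => by
    linarith [hφ n (n + 1) n.lt_succ_self, hp0 (xs n) (xs (n + 1))]
  intro ε hε
  obtain ⟨n₀, hn₀⟩ := eventually_atTop.1 ((tendsto_atTop_ciInf hanti hbdd).eventually
    (gt_mem_nhds (lt_add_of_pos_right _ hε)))
  exact ⟨n₀, fun m n hn hnm => by linarith [hφ n m hnm, hn₀ n hn, ciInf_le hbdd m]⟩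

lemma exists_seq_forall_succ_mem_lt_sInf_add {φ : X → ℝ} {x₀ : X} (hS0 : (S x₀).Nonempty)
    (htrans : ∀ x x', x' ∈ S x → S x' ⊆ S x) (hne : ∀ x ∈ S x₀, (S x).Nonempty) :
    ∃ xs : ℕ → X, (∀ n, xs n ∈ S x₀) ∧ (∀ n, xs (n + 1) ∈ S (xs n)) ∧
      ∀ n, φ (xs (n + 1)) < sInf (φ '' S (xs n)) + (1 / 2) ^ n := by
  have hstep : ∀ n : ℕ, ∀ x ∈ S x₀, ∃ x' ∈ S x, φ x' < sInf (φ '' S x) + (1 / 2) ^ n :=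
    fun n x hx => by
      obtain ⟨_, ⟨x', hx', rfl⟩, hlt⟩ :=
        Real.lt_sInf_add_pos ((hne x hx).image φ) (by positivity : (0 : ℝ) < (1 / 2) ^ n)
      exact ⟨x', hx', hlt⟩
  choose! g hgS hgφ using hstep
  obtain ⟨x₁, hx₁⟩ := hS0
  let xs : ℕ → X := fun n => Nat.rec x₁ g n
  have hxs : ∀ n, xs n ∈ S x₀ := by
    intro n
    induction n with
    | zero => exact hx₁
    | succ n ih => exact htrans _ _ ih (hgS n _ ih)
  exact ⟨xs, hxs, fun n => hgS n _ (hxs n), fun n => hgφ n _ (hxs n)⟩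

theorem exists_mem_forall_mem_eq_of_isDynamicallyComplete [UniformSpace X] {φ : X → ℝ}
    {p : X → X → ℝ} {x₀ : X} (hp0 : ∀ x x', 0 ≤ p x x')
    (hp2 : ∀ xs, IsCauchyFor p xs → CauchySeq xs) (hp3 : ∀ x x', x ≠ x' → 0 < p x x')
    (htrans : ∀ x x', x' ∈ S x → S x' ⊆ S x) (hφ : ∀ x ∈ S x₀, ∀ x' ∈ S x, φ x' + p x x' ≤ φ x)
    (hbdd : BddBelow (φ '' S x₀)) (hS0 : (S x₀).Nonempty)
    (hcomplete : IsDynamicallyComplete S (S x₀))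
    (hdyn : ∀ x ∈ S x₀, IsDynamicallyClosed S (S x)) :
    ∃ u ∈ S x₀, ∀ v ∈ S u, v = u := by
  by_contra! hne
  obtain ⟨xs, hxs0, hsucc, happrox⟩ := exists_seq_forall_succ_mem_lt_sInf_add (φ := φ) hS0 htrans
    fun x hx => (hne x hx).imp fun _ h => h.1
  have hcauchy : CauchySeq xs := hp2 xs <| isCauchyFor_of_add_le hp0
    (hbdd.mono (range_subset_iff.2 fun n => mem_image_of_mem φ (hxs0 n)))
    fun n m h => hφ _ (hxs0 n) _ (mem_of_forall_succ_mem htrans hsucc h)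
  obtain ⟨u, hu⟩ := hcomplete xs hxs0 (fun n => htrans _ _ (hsucc n))
    (fun n => htrans _ _ (hxs0 n)) hcauchy
  have huS : ∀ n, u ∈ S (xs n) := fun n =>
    mem_of_tendsto_of_isDynamicallyClosed htrans hsucc hu n (hdyn _ (hxs0 n))
  have hu0 : u ∈ S x₀ := htrans _ _ (hxs0 0) (huS 0)
  obtain ⟨v, hvS, hvu⟩ := hne u hu0
  have hφuv : φ u ≤ φ v := by
    refine le_of_forall_pos_le_add fun ε hε => ?_
    obtain ⟨n, hn⟩ := exists_pow_lt_of_lt_one hε (by norm_num : (1 / 2 : ℝ) < 1)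
    have hv : sInf (φ '' S (xs n)) ≤ φ v :=
      csInf_le (hbdd.mono (image_mono (htrans _ _ (hxs0 n))))
        (mem_image_of_mem φ (htrans _ _ (huS n) hvS))
    linarith [hφ _ (hxs0 (n + 1)) u (huS (n + 1)), happrox n, hp0 (xs (n + 1)) u]
  linarith [hφ u hu0 v hvS, hp3 u v (Ne.symm hvu)]

end Dynamic

theorem setvalued_EVP_p_distance_general {X Y : Type*} [MetricSpace X]
    [AddCommGroup Y] [Module ℝ Y] [TopologicalSpace Y]
    (D : Set Y) (hDadd : D + D ⊆ D) (hDsmul : ∀ α : ℝ, 0 ≤ α → α • D ⊆ D)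
    (H : Set Y) (hHD : H ⊆ D \ {0}) (hHconv : Convex ℝ H)
    (f : X → Set Y) (hf : ∀ x, (f x).Nonempty)
    (p : X → X → ℝ) (hp0 : ∀ x x', 0 ≤ p x x')
    (hp1 : ∀ x₁ x₂ x₃ : X, p x₁ x₃ ≤ p x₁ x₂ + p x₂ x₃)
    (hp2 : ∀ xs : ℕ → X,
      (∀ ε : ℝ, 0 < ε → ∃ n₀ : ℕ, ∀ m n : ℕ, n₀ ≤ n → n < m → p (xs n) (xs m) < ε) →
      CauchySeq xs)
    (hp3 : ∀ x x' : X, x ≠ x' → 0 < p x x')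
    (S : X → Set X)
    (hS : ∀ x, S x = {x' | f x ⊆ f x' + p x x' • H + D})
    (x₀ : X) (hS0 : (S x₀).Nonempty)
    (hcomplete : ∀ xs : ℕ → X, (∀ n, xs n ∈ S x₀) →
      (∀ n, S (xs (n + 1)) ⊆ S (xs n)) → (∀ n, S (xs n) ⊆ S x₀) →
      CauchySeq xs → ∃ u : X, Tendsto xs atTop (nhds u))
    (hdyn : ∀ x ∈ S x₀, ∀ xs : ℕ → X, (∀ n, xs n ∈ S x) →
      (∀ n, S (xs (n + 1)) ⊆ S (xs n)) → (∀ n, S (xs n) ⊆ S x) →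
      ∀ xbar : X, Tendsto xs atTop (nhds xbar) → xbar ∈ S x)
    (ξ : Y →L[ℝ] ℝ) (hξH : 0 < sInf (ξ '' H)) (hξD : ∀ d ∈ D, 0 ≤ ξ d)
    (hbd : ∃ c : ℝ, ∀ y ∈ ⋃ x ∈ S x₀, f x, c ≤ ξ y) :
    ∃ xhat : X,
      (f x₀ ⊆ f xhat + p x₀ xhat • H + D) ∧
      (∀ x : X, x ≠ xhat → ¬ f xhat ⊆ f x + p xhat x • H + D) := by
  obtain rfl : S = fun x => {x' | f x ⊆ f x' + p x x' • H + D} := funext hS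
  set α := sInf (ξ '' H)
  have hαH : ∀ h ∈ H, α ≤ ξ h := fun h hh =>
    csInf_le (not_not.1 fun h => hξH.ne' (Real.sInf_of_not_bddBelow h)) (mem_image_of_mem ξ hh)
  have hHD' : H ⊆ D := hHD.trans sdiff_subset
  have htrans : ∀ x x' x'', f x ⊆ f x' + p x x' • H + D → f x' ⊆ f x'' + p x' x'' • H + D →
      f x ⊆ f x'' + p x x'' • H + D := fun x x' x'' =>
    subset_add_smul_add_trans hDadd hDsmul hHD' hHconv (hp0 _ _) (hp0 _ _) (hp0 _ _) (hp1 _ _ _)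
  obtain ⟨c, hc⟩ := hbd
  have hlb : ∀ x, f x₀ ⊆ f x + p x₀ x • H + D → c ∈ lowerBounds (ξ '' f x) := by
    rintro x hx _ ⟨y, hy, rfl⟩
    exact hc y (mem_biUnion hx hy)
  obtain ⟨u, hu0, hu⟩ := exists_mem_forall_mem_eq_of_isDynamicallyComplete
    (φ := fun x => sInf (ξ '' f x) / α) hp0 hp2 hp3
    (fun x x' h₁ x'' h₂ => htrans x x' x'' h₁ h₂)
    (fun x hx x' hx' => by
      rw [div_add' _ _ _ hξH.ne', mul_comm]
      gcongr
      exact sInf_image_add_mul_le_of_subset ξ.toLinearMap (hp0 x x') hαH hξD (hf x)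
        ⟨c, hlb x' (htrans _ _ _ hx hx')⟩ hx')
    ⟨c / α, by
      rintro _ ⟨x, hx, rfl⟩
      exact div_le_div_of_nonneg_right (le_csInf ((hf x).image ξ) (hlb x hx)) hξH.le⟩
    hS0 hcomplete hdyn
  exact ⟨u, hu0, fun x hx hsub => hx (hu x hsub)⟩

/-- **Theorem 4.4.** Set-valued EVP with perturbation `p(·,·)H` for a generalized
distance `p`. -/
theorem setvalued_EVP_p_distance {X Y : Type*} [MetricSpace X]
    [AddCommGroup Y] [Module ℝ Y] [TopologicalSpace Y] [IsTopologicalAddGroup Y]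
    [ContinuousSMul ℝ Y] [LocallyConvexSpace ℝ Y]
    (D : Set Y) (hDadd : D + D ⊆ D) (hDsmul : ∀ α : ℝ, 0 ≤ α → α • D ⊆ D)
    (H : Set Y) (hHD : H ⊆ D \ {0}) (hHconv : Convex ℝ H)
    (f : X → Set Y) (hf : ∀ x, (f x).Nonempty)
    (p : X → X → ℝ) (hp0 : ∀ x x', 0 ≤ p x x')
    (hp1 : ∀ x₁ x₂ x₃ : X, p x₁ x₃ ≤ p x₁ x₂ + p x₂ x₃)
    (hp2 : ∀ xs : ℕ → X,
      (∀ ε : ℝ, 0 < ε → ∃ n₀ : ℕ, ∀ m n : ℕ, n₀ ≤ n → n < m → p (xs n) (xs m) < ε) →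
      CauchySeq xs)
    (hp3 : ∀ x x' : X, x ≠ x' → 0 < p x x')
    (S : X → Set X)
    (hS : ∀ x, S x = {x' | f x ⊆ f x' + p x x' • H + D})
    (x₀ : X) (hS0 : (S x₀).Nonempty)
    (hcomplete : ∀ xs : ℕ → X, (∀ n, xs n ∈ S x₀) →
      (∀ n, S (xs (n + 1)) ⊆ S (xs n)) → (∀ n, S (xs n) ⊆ S x₀) →
      CauchySeq xs → ∃ u : X, Tendsto xs atTop (nhds u))
    (hdyn : ∀ x ∈ S x₀, ∀ xs : ℕ → X, (∀ n, xs n ∈ S x) →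
      (∀ n, S (xs (n + 1)) ⊆ S (xs n)) → (∀ n, S (xs n) ⊆ S x) →
      ∀ xbar : X, Tendsto xs atTop (nhds xbar) → xbar ∈ S x)
    (hB1 : (0 : Y) ∉ closure (H + D))
    (ξ : Y →L[ℝ] ℝ) (hξH : 0 < sInf (ξ '' H)) (hξD : ∀ d ∈ D, 0 ≤ ξ d)
    (hbd : ∃ c : ℝ, ∀ y ∈ ⋃ x ∈ S x₀, f x, c ≤ ξ y) :
    ∃ xhat : X,
      (f x₀ ⊆ f xhat + p x₀ xhat • H + D) ∧
      (∀ x : X, x ≠ xhat → ¬ f xhat ⊆ f x + p xhat x • H + D) :=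
  setvalued_EVP_p_distance_general D hDadd hDsmul H hHD hHconv f hf p hp0 hp1 hp2 hp3 S hS x₀ hS0
    hcomplete hdyn ξ hξH hξD hbd
end
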